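/- Let m, p, n be positive integers with p | m, and let A(m,p,n) be the set of exponent tuples (a_1,...,a_n) such that there exists j with 0 ≤ a_i < i·m for i < j, 0 ≤ a_j < m/p, and m/p ≤ a_i < m/p + (i−1)·m for i > j. Then the generating function ∑_{(a_1,...,a_n) ∈ A(m,p,n)} q^{a_1+⋯+a_n} equals [m]_q · [2m]_q ⋯ [(n−1)m]_q · [nm/p]_q, where [k]_q = 1 + q + ⋯ + q^{k-1}. -/

import Mathlib

/-!
A tuple of `A(m,p,n)` has a unique pivot `j`, since `a_j < m/p ≤ a_i` for `i > j`, so `A(m,p,n)`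
is the disjoint union over `j` of boxes, products of intervals. With `d = m/p`, the box with
pivot `j` contributes `[m]_q ⋯ [jm]_q · [d]_q · q^{(n-1-j)d} [(j+1)m]_q ⋯ [(n-1)m]_q`, and
summing over `j` leaves the factor `[d]_q ∑_{j<n} q^{jd} = [nd]_q`.
-/

open Finset Polynomial

/-- Membership in the Artin basis index set `A(m,p,n)` of `G(m,p,n)` (0-indexed version of the
1-indexed description: `a_i < i·m` for `i < j`, `a_j < m/p`, `m/p ≤ a_i < m/p + (i-1)·m`
for `i > j`). -/
def ArtinMem (m p n : ℕ) (a : Fin n → ℕ) : Prop :=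
  ∃ j : Fin n,
    (∀ i : Fin n, i < j → a i < (i.1 + 1) * m) ∧
    a j < m / p ∧
    (∀ i : Fin n, j < i → m / p ≤ a i ∧ a i < m / p + i.1 * m)

open Classical in
/-- The Artin basis index set as a finite set of exponent tuples. -/
noncomputable def ArtinSet (m p n : ℕ) : Finset (Fin n → ℕ) :=
  (Fintype.piFinset fun i : Fin n => Finset.range ((i.1 + 1) * m)).filter (ArtinMem m p n)

/-- The `q`-integer `[k]_q = 1 + q + ⋯ + q^{k-1}`. -/
noncomputable def qint (k : ℕ) : Polynomial ℤ := ∑ i ∈ Finset.range k, X ^ i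

theorem sum_piFinset_pow_sum {R ι : Type*} [CommSemiring R] [Fintype ι] [DecidableEq ι]
    (s : ι → Finset ℕ) (x : R) :
    ∑ a ∈ Fintype.piFinset s, x ^ (∑ i, a i) = ∏ i, ∑ k ∈ s i, x ^ k := by
  rw [Finset.prod_univ_sum]
  exact sum_congr rfl fun a _ => (prod_pow_eq_pow_sum _ _ _).symm

theorem prod_range_pivot {M : Type*} [CommMonoid M] (f g : ℕ → M) (c : M) (j t : ℕ) :
    ∏ i ∈ range (j + 1 + t), (if i < j then f i else if i = j then c else g i) =
      (∏ i ∈ range j, f i) * c * ∏ i ∈ range t, g (j + 1 + i) := by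
  rw [prod_range_add, prod_range_succ, if_neg (lt_irrefl j), if_pos rfl,
    prod_congr rfl fun i hi => if_pos (mem_range.mp hi)]
  exact congrArg _ (prod_congr rfl fun i _ => by rw [if_neg (by omega), if_neg (by omega)])

theorem qint_mul (n d : ℕ) :
    qint (n * d) = (∑ j ∈ range n, (X : ℤ[X]) ^ (j * d)) * qint d := by
  induction n with
  | zero => simp [qint]
  | succ n ih =>
    rw [Nat.succ_mul, qint, sum_range_add, ← qint, ih, sum_range_succ, add_mul]
    simp only [qint, mul_sum, pow_add]

theorem sum_Ico_X_pow (d k : ℕ) : ∑ i ∈ Ico d (d + k), (X : ℤ[X]) ^ i = X ^ d * qint k := by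
  simp [sum_Ico_eq_sum_range, qint, mul_sum, pow_add]

/-- The range of the `i`-th exponent of a tuple of `A(m,p,n)` with pivot `j`, where `d = m/p`
(indices shifted to start at `0`). -/
def pivotRange (m d j i : ℕ) : Finset ℕ :=
  if i < j then range ((i + 1) * m) else if i = j then range d else Ico d (d + i * m)

def artinSlice (m d n : ℕ) (j : Fin n) : Finset (Fin n → ℕ) :=
  Fintype.piFinset fun i : Fin n => pivotRange m d j i

section

variable {m d n : ℕ}

theorem mem_artinSlice {j : Fin n} {a : Fin n → ℕ} :
    a ∈ artinSlice m d n j ↔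
      (∀ i, i < j → a i < (i.1 + 1) * m) ∧ a j < d ∧
        ∀ i, j < i → d ≤ a i ∧ a i < d + i.1 * m := by
  simp only [artinSlice, Fintype.mem_piFinset, pivotRange]
  refine ⟨fun h => ⟨fun i hi => ?_, ?_, fun i hi => ?_⟩, fun ⟨hlt, heq, hgt⟩ i => ?_⟩
  · simpa [Fin.lt_def.mp hi] using h i
  · simpa using h j
  · simpa [Fin.ext_iff, (Fin.lt_def.mp hi).not_gt, (Fin.lt_def.mp hi).ne'] using h i
  · rcases lt_trichotomy i j with hi | rfl | hi
    · simpa [Fin.lt_def.mp hi] using hlt i hi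
    · simpa using heq
    · simpa [Fin.ext_iff, (Fin.lt_def.mp hi).not_gt, (Fin.lt_def.mp hi).ne'] using hgt i hi

theorem artinSlice_subset (hd : d ≤ m) (j : Fin n) :
    artinSlice m d n j ⊆ Fintype.piFinset fun i : Fin n => range ((i.1 + 1) * m) := by
  intro a ha
  obtain ⟨hlt, heq, hgt⟩ := mem_artinSlice.mp ha
  refine Fintype.mem_piFinset.mpr fun i => mem_range.mpr ?_
  rcases lt_trichotomy i j with hi | rfl | hi
  · exact hlt i hi
  · nlinarith
  · nlinarith [hgt i hi]

theorem pairwiseDisjoint_artinSlice :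
    (↑(univ : Finset (Fin n)) : Set (Fin n)).PairwiseDisjoint (artinSlice m d n) := by
  suffices h : ∀ j k : Fin n, j < k → Disjoint (artinSlice m d n j) (artinSlice m d n k) from
    fun j _ k _ hjk => hjk.lt_or_gt.elim (h j k) fun hkj => (h k j hkj).symm
  refine fun j k hjk => disjoint_left.mpr fun a hj hk => ?_
  exact (mem_artinSlice.mp hj).2.2 k hjk |>.1.not_gt (mem_artinSlice.mp hk).2.1

theorem sum_artinSlice (j : Fin n) :
    ∑ a ∈ artinSlice m d n j, (X : ℤ[X]) ^ (∑ i, a i) =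
      qint d * X ^ ((n - 1 - j) * d) * ∏ k ∈ range (n - 1), qint ((k + 1) * m) := by
  rw [artinSlice, sum_piFinset_pow_sum,
    Fin.prod_univ_eq_prod_range (fun i => ∑ k ∈ pivotRange m d j i, (X : ℤ[X]) ^ k)]
  obtain ⟨j, hj⟩ := j
  obtain ⟨t, rfl⟩ : ∃ t, n = j + 1 + t := ⟨n - 1 - j, by omega⟩
  dsimp only
  have hrange (i : ℕ) : ∑ k ∈ pivotRange m d j i, (X : ℤ[X]) ^ k =
      if i < j then qint ((i + 1) * m) else if i = j then qint d else X ^ d * qint (i * m) := by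
    unfold pivotRange
    split_ifs <;> simp only [qint, sum_Ico_X_pow]
  simp_rw [hrange, prod_range_pivot, prod_mul_distrib, prod_const, card_range]
  rw [show j + 1 + t - 1 = j + t by omega, Nat.add_sub_cancel_left, prod_range_add]
  simp_rw [add_right_comm j 1]
  ring

end

theorem artinSet_eq_biUnion (m p n : ℕ) :
    ArtinSet m p n = univ.biUnion (artinSlice m (m / p) n) := by
  ext a
  simp only [ArtinSet, mem_filter, mem_biUnion, mem_univ, true_and, ArtinMem, ← mem_artinSlice]
  exact ⟨fun h => h.2,
    fun ⟨j, h⟩ => ⟨artinSlice_subset (Nat.div_le_self m p) j h, j, h⟩⟩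

theorem artinSet_hilbert_series_general (m p n : ℕ) (hpm : p ∣ m) :
    ∑ a ∈ ArtinSet m p n, (X : Polynomial ℤ) ^ (∑ i, a i) =
      (∏ i ∈ Finset.range (n - 1), qint ((i + 1) * m)) * qint (n * m / p) := by
  rw [Nat.mul_div_assoc n hpm, artinSet_eq_biUnion, sum_biUnion pairwiseDisjoint_artinSlice]
  simp_rw [sum_artinSlice]
  rw [← sum_mul, ← mul_sum,
    Fin.sum_univ_eq_sum_range (fun j => (X : ℤ[X]) ^ ((n - 1 - j) * (m / p))),
    sum_range_reflect (fun j => (X : ℤ[X]) ^ (j * (m / p))), qint_mul]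
  ring

/-- Hilbert series of the Artin basis:
`∑_{a ∈ A(m,p,n)} q^{a_1+⋯+a_n} = [m]_q [2m]_q ⋯ [(n-1)m]_q [nm/p]_q`. -/
theorem artinSet_hilbert_series (m p n : ℕ) (hm : 1 ≤ m) (hp : 1 ≤ p) (hn : 1 ≤ n)
    (hpm : p ∣ m) :
    ∑ a ∈ ArtinSet m p n, (X : Polynomial ℤ) ^ (∑ i, a i) =
      (∏ i ∈ Finset.range (n - 1), qint ((i + 1) * m)) * qint (n * m / p) :=
  artinSet_hilbert_series_general m p n hpm
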